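/- arXiv:2406.17730 — 2 statements merged into one kernel-verified Lean document; each statement's English description precedes it below -/
import Mathlib

section
/- Let A be a d×n integer matrix such that the only vector in ker(A) with all coordinates nonnegative is 0. If a set of moves B ⊆ ker(A) reduces the distance of every element of the Graver basis G(A), then B is a Markov basis for A. -/
open Pointwise

namespace DistRed

variable {n d : ℕ}

/-- Componentwise positive part `u⁺`. -/
def posP (u : Fin n → ℤ) : Fin n → ℤ := fun i => max (u i) 0

/-- Componentwise negative part `u⁻`. -/
def negP (u : Fin n → ℤ) : Fin n → ℤ := fun i => max (-u i) 0

/-- The 1-norm `‖u‖ = ∑ᵢ |uᵢ|`. -/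
def onorm (u : Fin n → ℤ) : ℤ := ∑ i, |u i|

/-- Componentwise inequality of vectors. -/
def vle (u v : Fin n → ℤ) : Prop := ∀ i, u i ≤ v i

/-- The single move `u` reduces the 1-norm distance of `z = z⁺ - z⁻`. -/
def reducesOne (u z : Fin n → ℤ) : Prop :=
  (vle (posP u) (posP z) ∧ onorm (z - u) < onorm z) ∨
  (vle (negP u) (posP z) ∧ onorm (z + u) < onorm z) ∨
  (vle (posP u) (negP z) ∧ onorm (z + u) < onorm z) ∨
  (vle (negP u) (negP z) ∧ onorm (z - u) < onorm z)

/-- `B` reduces the distance of `z`. -/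
def reduces (B : Set (Fin n → ℤ)) (z : Fin n → ℤ) : Prop := ∃ u ∈ B, reducesOne u z

/-- `B` strongly reduces the distance of `z`. -/
def stronglyReduces (B : Set (Fin n → ℤ)) (z : Fin n → ℤ) : Prop :=
  (∃ u ∈ B, (vle (posP u) (posP z) ∧ onorm (z - u) < onorm z) ∨
            (vle (negP u) (posP z) ∧ onorm (z + u) < onorm z)) ∧
  (∃ u ∈ B, (vle (posP u) (negP z) ∧ onorm (z + u) < onorm z) ∨
            (vle (negP u) (negP z) ∧ onorm (z - u) < onorm z))

/-- `B` is distance reducing relative to the kernel `K`. -/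
def distanceReducing (K B : Set (Fin n → ℤ)) : Prop := ∀ z ∈ K, z ≠ 0 → reduces B z

/-- `B` is strongly distance reducing relative to the kernel `K`. -/
def stronglyDistanceReducing (K B : Set (Fin n → ℤ)) : Prop :=
  ∀ z ∈ K, z ≠ 0 → stronglyReduces B z

/-- The Graver basis: nonzero elements of `K` with no proper conformal decomposition. -/
def graver (K : Set (Fin n → ℤ)) : Set (Fin n → ℤ) :=
  {z | z ∈ K ∧ z ≠ 0 ∧ ¬ ∃ u v, u ∈ K ∧ v ∈ K ∧ u ≠ 0 ∧ v ≠ 0 ∧ z = u + v ∧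
      posP z = posP u + posP v ∧ negP z = negP u + negP v}

/-- `B` connects `x` and `y` through nonnegative points by moves in `B ∪ -B`. -/
def connects (B : Set (Fin n → ℤ)) (x y : Fin n → ℤ) : Prop :=
  ∃ (k : ℕ) (f : Fin (k + 1) → Fin n → ℤ),
    f 0 = x ∧ f (Fin.last k) = y ∧ (∀ i j, 0 ≤ f i j) ∧
    ∀ i : Fin k, f i.succ - f i.castSucc ∈ B ∪ -B

/-- Kernel of an integer matrix. -/
def kerM (A : Matrix (Fin d) (Fin n) ℤ) : Set (Fin n → ℤ) := {u | A.mulVec u = 0}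

/-- Markov basis of a matrix. -/
def isMarkovM (A : Matrix (Fin d) (Fin n) ℤ) (B : Set (Fin n → ℤ)) : Prop :=
  B ⊆ kerM A ∧ ∀ x y : Fin n → ℤ, (∀ j, 0 ≤ x j) → (∀ j, 0 ≤ y j) →
    A.mulVec x = A.mulVec y → connects B x y

def isMinimalMarkovM (A : Matrix (Fin d) (Fin n) ℤ) (B : Set (Fin n → ℤ)) : Prop :=
  isMarkovM A B ∧ ∀ B' ⊂ B, ¬ isMarkovM A B'

/-- Kernel of the 1×n matrix `a`. -/
def kerV (a : Fin n → ℕ) : Set (Fin n → ℤ) := {u | ∑ i, (a i : ℤ) * u i = 0}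

/-- Markov basis of a 1×n matrix. -/
def isMarkov (a : Fin n → ℕ) (B : Set (Fin n → ℤ)) : Prop :=
  B ⊆ kerV a ∧ ∀ x y : Fin n → ℤ, (∀ j, 0 ≤ x j) → (∀ j, 0 ≤ y j) →
    (∑ i, (a i : ℤ) * x i) = (∑ i, (a i : ℤ) * y i) → connects B x y

def isMinimalMarkov (a : Fin n → ℕ) (B : Set (Fin n → ℤ)) : Prop :=
  isMarkov a B ∧ ∀ B' ⊂ B, ¬ isMarkov a B'

/-- The circuit `z_{i,j}` of the 1×n matrix `a`. -/
def circuit (a : Fin n → ℕ) (i j : Fin n) : Fin n → ℤ :=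
  fun k => if k = i then ((a j / Nat.gcd (a i) (a j) : ℕ) : ℤ)
           else if k = j then -((a i / Nat.gcd (a i) (a j) : ℕ) : ℤ) else 0

/-- `B` reduces the distance of all circuits of `a`. -/
def reducesCircuits (a : Fin n → ℕ) (B : Set (Fin n → ℤ)) : Prop :=
  ∀ i j : Fin n, i < j → reduces B (circuit a i j)

/-- `a` admits a gluing of the first kind. -/
def firstKind (a : Fin n → ℕ) : Prop :=
  ∀ k : Fin n, 1 ≤ k.val →
    ∃ lam : Fin n → ℕ, (∀ i, ¬ i < k → lam i = 0) ∧
      Nat.lcm ((Finset.univ.filter (fun i : Fin n => i < k)).gcd a) (a k) = ∑ i, lam i * a i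

/-- Kernel of the submatrix of `a` indexed by `S`, as vectors supported on `S`. -/
def kerOn (a : Fin n → ℕ) (S : Finset (Fin n)) : Set (Fin n → ℤ) :=
  {u | (∀ i, i ∉ S → u i = 0) ∧ ∑ i, (a i : ℤ) * u i = 0}

/-- `a` is glued along the pair of disjoint index sets `(S, T)`. -/
def gluedOn (a : Fin n → ℕ) (S T : Finset (Fin n)) : Prop :=
  ∃ z ∈ kerOn a (S ∪ T), (∀ i, 0 < z i → i ∈ S) ∧ (∀ i, z i < 0 → i ∈ T) ∧
    ∀ w ∈ kerOn a (S ∪ T), ∃! t : (Fin n → ℤ) × (Fin n → ℤ) × ℤ,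
      t.1 ∈ kerOn a S ∧ t.2.1 ∈ kerOn a T ∧ w = t.1 + t.2.1 + t.2.2 • z

/-- Complete intersection on the index set `S` (recursively defined via gluings). -/
inductive IsCIOn (a : Fin n → ℕ) : Finset (Fin n) → Prop
  | single (i : Fin n) : IsCIOn a {i}
  | glue {S T : Finset (Fin n)} (hS : S.Nonempty) (hT : T.Nonempty)
      (hd : Disjoint S T) (hg : gluedOn a S T) (cS : IsCIOn a S) (cT : IsCIOn a T) :
      IsCIOn a (S ∪ T)

/-- `a` is a complete intersection. -/
def isCI (a : Fin n → ℕ) : Prop := IsCIOn a Finset.univ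

/-- Positive distance decomposition. -/
def posDD (K : Set (Fin n → ℤ)) (z : Fin n → ℤ) : Prop :=
  ∃ u v, u ∈ K ∧ v ∈ K ∧ u ≠ 0 ∧ v ≠ 0 ∧ z = u + v ∧ vle (posP u) (posP z) ∧
    onorm v < onorm z

/-- Negative distance decomposition. -/
def negDD (K : Set (Fin n → ℤ)) (z : Fin n → ℤ) : Prop :=
  ∃ u v, u ∈ K ∧ v ∈ K ∧ u ≠ 0 ∧ v ≠ 0 ∧ z = u + v ∧ vle (negP u) (negP z) ∧
    onorm v < onorm z

def Dplus (K : Set (Fin n → ℤ)) : Set (Fin n → ℤ) := {z | z ∈ K ∧ z ≠ 0 ∧ ¬ posDD K z}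

def Dminus (K : Set (Fin n → ℤ)) : Set (Fin n → ℤ) := {z | z ∈ K ∧ z ≠ 0 ∧ ¬ negDD K z}

/-- The distance irreducible elements `D(A)`. -/
def Dboth (K : Set (Fin n → ℤ)) : Set (Fin n → ℤ) := Dplus K ∩ Dminus K

/-- The weakly distance irreducible elements `D^w(A)`. -/
def Dweak (K : Set (Fin n → ℤ)) : Set (Fin n → ℤ) := Dplus K ∪ Dminus K

/-- The indispensable set `S(A)`. -/
def indisp (K : Set (Fin n → ℤ)) : Set (Fin n → ℤ) :=
  {z | z ∈ K ∧ z ≠ 0 ∧ ¬ ∃ u v, u ∈ K ∧ v ∈ K ∧ u ≠ 0 ∧ v ≠ 0 ∧ z = u + v ∧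
      ∀ i, 0 < u i → 0 ≤ v i}

/-- Minimally distance reducing subset of `K`. -/
def minDistRed (K B : Set (Fin n → ℤ)) : Prop :=
  B ⊆ K ∧ distanceReducing K B ∧ ∀ B' ⊂ B, ¬ distanceReducing K B'

/-- Minimally strongly distance reducing subset of `K`. -/
def minStrongDistRed (K B : Set (Fin n → ℤ)) : Prop :=
  B ⊆ K ∧ stronglyDistanceReducing K B ∧ ∀ B' ⊂ B, ¬ stronglyDistanceReducing K B'


-- auxiliary lemmas
lemma abs_split (g z : ℤ) (h1 : max g 0 ≤ max z 0) (h2 : max (-g) 0 ≤ max (-z) 0) :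
    |z| = |g| + |z - g| := by
  simp only [abs_eq_max_neg, max_def] at *; split_ifs at * <;> omega

lemma abs_posneg (a : ℤ) : |a| = max a 0 + max (-a) 0 := by
  simp only [abs_eq_max_neg, max_def]; split_ifs <;> omega

lemma onorm_nonneg (z : Fin n → ℤ) : 0 ≤ onorm z :=
  Finset.sum_nonneg fun i _ => abs_nonneg _

lemma onorm_pos {z : Fin n → ℤ} (h : z ≠ 0) : 0 < onorm z := by
  obtain ⟨i, hi⟩ := Function.ne_iff.mp h
  exact Finset.sum_pos' (fun i _ => abs_nonneg _)
    ⟨i, Finset.mem_univ i, abs_pos.mpr (by simpa using hi)⟩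

lemma onorm_triangle (a b : Fin n → ℤ) : onorm (a + b) ≤ onorm a + onorm b := by
  rw [onorm, onorm, onorm, ← Finset.sum_add_distrib]
  exact Finset.sum_le_sum fun i _ => abs_add_le _ _

lemma conformal_split {g z : Fin n → ℤ} (h1 : vle (posP g) (posP z))
    (h2 : vle (negP g) (negP z)) : onorm z = onorm g + onorm (z - g) := by
  rw [onorm, onorm, onorm, ← Finset.sum_add_distrib]
  exact Finset.sum_congr rfl fun i _ => abs_split (g i) (z i) (h1 i) (h2 i)

lemma key_lt_add {z g u : Fin n → ℤ} (h1 : vle (posP g) (posP z))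
    (h2 : vle (negP g) (negP z)) (h : onorm (g + u) < onorm g) :
    onorm (z + u) < onorm z := by
  have hsplit := conformal_split h1 h2
  have heq : z + u = (z - g) + (g + u) := by ring
  have ht := onorm_triangle (z - g) (g + u)
  rw [← heq] at ht; linarith

lemma key_lt_sub {z g u : Fin n → ℤ} (h1 : vle (posP g) (posP z))
    (h2 : vle (negP g) (negP z)) (h : onorm (g - u) < onorm g) :
    onorm (z - u) < onorm z := by
  have hsplit := conformal_split h1 h2
  have heq : z - u = (z - g) + (g - u) := by ring
  have ht := onorm_triangle (z - g) (g - u)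
  rw [← heq] at ht; linarith

lemma onorm_decomp {u v : Fin n → ℤ} (hp : posP (u + v) = posP u + posP v)
    (hn : negP (u + v) = negP u + negP v) : onorm (u + v) = onorm u + onorm v := by
  rw [onorm, onorm, onorm, ← Finset.sum_add_distrib]
  refine Finset.sum_congr rfl fun i _ => ?_
  have h1 := congrFun hp i
  have h2 := congrFun hn i
  simp only [posP, negP, Pi.add_apply] at h1 h2
  rw [abs_posneg, abs_posneg, abs_posneg, Pi.add_apply]
  omega

lemma graver_below (A : Matrix (Fin d) (Fin n) ℤ) :
    ∀ z ∈ kerM A, z ≠ 0 → ∃ g ∈ graver (kerM A),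
      vle (posP g) (posP z) ∧ vle (negP g) (negP z) := by
  suffices h : ∀ N : ℕ, ∀ z ∈ kerM A, z ≠ 0 → (onorm z).toNat ≤ N →
      ∃ g ∈ graver (kerM A), vle (posP g) (posP z) ∧ vle (negP g) (negP z) by
    intro z hz hz0; exact h _ z hz hz0 le_rfl
  intro N
  induction N with
  | zero =>
    intro z hz hz0 hN
    have := onorm_pos hz0; omega
  | succ N ih =>
    intro z hz hz0 hN
    by_cases hg : z ∈ graver (kerM A)
    · exact ⟨z, hg, fun i => le_refl _, fun i => le_refl _⟩
    · simp only [graver, Set.mem_setOf_eq] at hg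
      push_neg at hg
      obtain ⟨u, v, hu, hv, hu0, hv0, hzuv, hpp, hnn⟩ := hg hz hz0
      subst hzuv
      have hup : vle (posP u) (posP (u + v)) := fun i => by
        have h := congrFun hpp i
        have h2 : (0:ℤ) ≤ posP v i := le_max_right _ _
        simp only [Pi.add_apply] at h; omega
      have hun : vle (negP u) (negP (u + v)) := fun i => by
        have h := congrFun hnn i
        have h2 : (0:ℤ) ≤ negP v i := le_max_right _ _
        simp only [Pi.add_apply] at h; omega
      have hdec := onorm_decomp hpp hnn
      have hvpos := onorm_pos hv0
      have hNu : (onorm u).toNat ≤ N := by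
        have := onorm_nonneg u; have := onorm_nonneg (u + v); omega
      obtain ⟨g, hgG, hg1, hg2⟩ := ih u hu hu0 hNu
      exact ⟨g, hgG, fun i => le_trans (hg1 i) (hup i),
        fun i => le_trans (hg2 i) (hun i)⟩

lemma neg_mem_union {B : Set (Fin n → ℤ)} {v : Fin n → ℤ} (h : v ∈ B ∪ -B) :
    -v ∈ B ∪ -B := by
  rcases h with h | h
  · exact Or.inr (Set.neg_mem_neg.mpr h)
  · exact Or.inl (by simpa using h)

lemma connects_refl (B : Set (Fin n → ℤ)) (x : Fin n → ℤ) (hx : ∀ j, 0 ≤ x j) :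
    connects B x x :=
  ⟨0, fun _ => x, rfl, rfl, fun _ j => hx j, fun i => i.elim0⟩

lemma connects_cons {B : Set (Fin n → ℤ)} {x x' y : Fin n → ℤ}
    (hx : ∀ j, 0 ≤ x j) (hm : x' - x ∈ B ∪ -B) (h : connects B x' y) :
    connects B x y := by
  obtain ⟨k, f, h0, hl, hnn, hmv⟩ := h
  refine ⟨k + 1, Fin.cases x f, by simp, ?_, ?_, ?_⟩
  · show (Fin.cases x f : Fin (k+2) → Fin n → ℤ) (Fin.last (k+1)) = y
    rw [← Fin.succ_last]; simp only [Fin.cases_succ]; exact hl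
  · intro i j
    induction i using Fin.cases with
    | zero => simpa using hx j
    | succ j' => simpa using hnn j' j
  · intro i
    induction i using Fin.cases with
    | zero =>
      show (Fin.cases x f : Fin (k+2) → Fin n → ℤ) (Fin.succ 0) -
        (Fin.cases x f : Fin (k+2) → Fin n → ℤ) (Fin.castSucc 0) ∈ B ∪ -B
      rw [Fin.castSucc_zero]
      simp only [Fin.cases_succ, Fin.cases_zero, h0]
      exact hm
    | succ j =>
      show (Fin.cases x f : Fin (k+2) → Fin n → ℤ) (Fin.succ j.succ) -
        (Fin.cases x f : Fin (k+2) → Fin n → ℤ) (Fin.castSucc j.succ) ∈ B ∪ -B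
      simp only [Fin.cases_succ]
      exact hmv j

lemma connects_symm {B : Set (Fin n → ℤ)} {x y : Fin n → ℤ}
    (h : connects B x y) : connects B y x := by
  obtain ⟨k, f, h0, hl, hnn, hmv⟩ := h
  refine ⟨k, fun i => f i.rev, ?_, ?_, fun i j => hnn _ j, ?_⟩
  · show f (Fin.rev 0) = y; rw [Fin.rev_zero]; exact hl
  · show f (Fin.rev (Fin.last k)) = x; rw [Fin.rev_last]; exact h0
  · intro i
    show f (Fin.rev i.succ) - f (Fin.rev i.castSucc) ∈ B ∪ -B
    rw [Fin.rev_succ, Fin.rev_castSucc]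
    have := neg_mem_union (hmv i.rev)
    simpa using this

lemma connects_snoc {B : Set (Fin n → ℤ)} {x y y' : Fin n → ℤ}
    (h : connects B x y') (hy : ∀ j, 0 ≤ y j) (hm : y - y' ∈ B ∪ -B) :
    connects B x y := by
  have h1 : y' - y ∈ B ∪ -B := by
    have := neg_mem_union hm; simpa using this
  exact connects_symm (connects_cons hy h1 (connects_symm h))


/-- If `B` reduces the distance of every element of the Graver basis,
then `B` is a Markov basis. -/
theorem markov_of_reduces_graver {d n : ℕ} (A : Matrix (Fin d) (Fin n) ℤ)
    (hker : ∀ u ∈ kerM A, (∀ i, 0 ≤ u i) → u = 0)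
    (B : Set (Fin n → ℤ)) (hB : B ⊆ kerM A)
    (hred : ∀ z ∈ graver (kerM A), reduces B z) :
    isMarkovM A B := by
  refine ⟨hB, ?_⟩
  have key : ∀ N : ℕ, ∀ x y : Fin n → ℤ, (∀ j, 0 ≤ x j) → (∀ j, 0 ≤ y j) →
      A.mulVec x = A.mulVec y → (onorm (x - y)).toNat ≤ N → connects B x y := by
    intro N
    induction N with
    | zero =>
      intro x y hx hy hxy hN
      have h0 : x - y = 0 := by
        by_contra h; have := onorm_pos h; omega
      rw [sub_eq_zero] at h0
      subst h0; exact connects_refl B x hx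
    | succ N ih =>
      intro x y hx hy hxy hN
      by_cases h0 : x - y = 0
      · rw [sub_eq_zero] at h0; subst h0; exact connects_refl B x hx
      · have hzK : (x - y) ∈ kerM A := by
          show A.mulVec (x - y) = 0
          rw [Matrix.mulVec_sub, hxy, sub_self]
        obtain ⟨g, hgG, hg1, hg2⟩ := graver_below A _ hzK h0
        obtain ⟨u, huB, hcase⟩ := hred g hgG
        have huK : A.mulVec u = 0 := hB huB
        have hposx : ∀ i, posP (x - y) i ≤ x i := fun i => by
          simp only [posP, Pi.sub_apply]
          exact max_le (by linarith [hy i]) (hx i)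
        have hnegy : ∀ i, negP (x - y) i ≤ y i := fun i => by
          simp only [negP, Pi.sub_apply, neg_sub]
          exact max_le (by linarith [hx i]) (hy i)
        rcases hcase with ⟨h1, h2⟩ | ⟨h1, h2⟩ | ⟨h1, h2⟩ | ⟨h1, h2⟩
        · -- u⁺ ≤ g⁺, move x ↦ x - u
          have hx' : ∀ j, 0 ≤ (x - u) j := fun j => by
            have h3 : u j ≤ x j :=
              le_trans (le_max_left _ _) (le_trans (h1 j) (le_trans (hg1 j) (hposx j)))
            simp only [Pi.sub_apply]; linarith
          have hA' : A.mulVec (x - u) = A.mulVec y := by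
            rw [Matrix.mulVec_sub, huK, sub_zero, hxy]
          have hlt : onorm ((x - u) - y) < onorm (x - y) := by
            have heq : (x - u) - y = (x - y) - u := by ring
            rw [heq]; exact key_lt_sub hg1 hg2 h2
          have hc := ih (x - u) y hx' hy hA' (by have := onorm_nonneg ((x-u)-y); omega)
          refine connects_cons hx ?_ hc
          have : (x - u) - x = -u := by ring
          rw [this]; exact Or.inr (Set.neg_mem_neg.mpr huB)
        · -- u⁻ ≤ g⁺, move x ↦ x + u
          have hx' : ∀ j, 0 ≤ (x + u) j := fun j => by
            have h3 : -u j ≤ x j :=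
              le_trans (le_max_left _ _) (le_trans (h1 j) (le_trans (hg1 j) (hposx j)))
            simp only [Pi.add_apply]; linarith
          have hA' : A.mulVec (x + u) = A.mulVec y := by
            rw [Matrix.mulVec_add, huK, add_zero, hxy]
          have hlt : onorm ((x + u) - y) < onorm (x - y) := by
            have heq : (x + u) - y = (x - y) + u := by ring
            rw [heq]; exact key_lt_add hg1 hg2 h2
          have hc := ih (x + u) y hx' hy hA' (by have := onorm_nonneg ((x+u)-y); omega)
          refine connects_cons hx ?_ hc
          have : (x + u) - x = u := by ring
          rw [this]; exact Or.inl huB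
        · -- u⁺ ≤ g⁻, move y ↦ y - u
          have hy' : ∀ j, 0 ≤ (y - u) j := fun j => by
            have h3 : u j ≤ y j :=
              le_trans (le_max_left _ _) (le_trans (h1 j) (le_trans (hg2 j) (hnegy j)))
            simp only [Pi.sub_apply]; linarith
          have hA' : A.mulVec x = A.mulVec (y - u) := by
            rw [Matrix.mulVec_sub, huK, sub_zero, hxy]
          have hlt : onorm (x - (y - u)) < onorm (x - y) := by
            have heq : x - (y - u) = (x - y) + u := by ring
            rw [heq]; exact key_lt_add hg1 hg2 h2
          have hc := ih x (y - u) hx hy' hA' (by have := onorm_nonneg (x-(y-u)); omega)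
          refine connects_snoc hc hy ?_
          have : y - (y - u) = u := by ring
          rw [this]; exact Or.inl huB
        · -- u⁻ ≤ g⁻, move y ↦ y + u
          have hy' : ∀ j, 0 ≤ (y + u) j := fun j => by
            have h3 : -u j ≤ y j :=
              le_trans (le_max_left _ _) (le_trans (h1 j) (le_trans (hg2 j) (hnegy j)))
            simp only [Pi.add_apply]; linarith
          have hA' : A.mulVec x = A.mulVec (y + u) := by
            rw [Matrix.mulVec_add, huK, add_zero, hxy]
          have hlt : onorm (x - (y + u)) < onorm (x - y) := by
            have heq : x - (y + u) = (x - y) - u := by ring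
            rw [heq]; exact key_lt_sub hg1 hg2 h2
          have hc := ih x (y + u) hx hy' hA' (by have := onorm_nonneg (x-(y+u)); omega)
          refine connects_snoc hc hy ?_
          have : y - (y + u) = -u := by ring
          rw [this]; exact Or.inr (Set.neg_mem_neg.mpr huB)
  intro x y hx hy hxy
  exact key _ x y hx hy hxy le_rfl


end DistRed
end

section
/- Let A = (a₁, a₂, a₃) be a 1×3 matrix of positive integers with a₁ < a₂ < a₃. Let M = {g₁, g₂, g₃} be a minimal Markov basis for A where g₁ = (−c₁, v₁₂, v₁₃), g₂ = (v₂₁, −c₂, v₂₃), g₃ = (v₃₁, v₃₂, −c₃) with all cᵢ and v_{ij} positive, and assume g₁ + g₂ + g₃ = 0 (this relation holds automatically, by Herzog's theorem, for the minimal Markov basis of a non-complete-intersection monomial curve in 𝔸³). Then the following are equivalent: (1) M is distance reducing; (2) M reduces the distance of the circuit z_{2,3} = (0, a₃/g, −a₂/g) where g = gcd(a₂, a₃); (3) v₂₁ < c₂ + v₂₃ or v₃₁ < v₃₂ + c₃. -/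
open Pointwise

namespace DistRed

variable {n d : ℕ}

/- ===== auxiliary lemmas for dim3_nci ===== -/

lemma vec0' (x y z : ℤ) : (![x,y,z]) 0 = x := rfl
lemma vec1' (x y z : ℤ) : (![x,y,z]) 1 = y := rfl
lemma vec2' (x y z : ℤ) : (![x,y,z]) 2 = z := rfl

lemma onorm3 (u : Fin 3 → ℤ) : onorm u = |u 0| + |u 1| + |u 2| := by
  simp [onorm, Fin.sum_univ_three]

lemma vle3 {u v : Fin 3 → ℤ} (h0 : u 0 ≤ v 0) (h1 : u 1 ≤ v 1) (h2 : u 2 ≤ v 2) : vle u v := by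
  intro i; fin_cases i <;> assumption

lemma posP_neg' {m : ℕ} (u : Fin m → ℤ) : posP (-u) = negP u := by
  funext i; simp [posP, negP]

lemma negP_neg' {m : ℕ} (u : Fin m → ℤ) : negP (-u) = posP u := by
  funext i; simp [posP, negP]

lemma onorm_neg' {m : ℕ} (u : Fin m → ℤ) : onorm (-u) = onorm u := by
  simp [onorm]

lemma reducesOne_neg {m : ℕ} {u z : Fin m → ℤ} (h : reducesOne u (-z)) : reducesOne u z := by
  unfold reducesOne at h ⊢
  rw [posP_neg', negP_neg'] at h
  have e1 : onorm (-z - u) = onorm (z + u) := by rw [show -z - u = -(z+u) by abel, onorm_neg']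
  have e2 : onorm (-z + u) = onorm (z - u) := by rw [show -z + u = -(z-u) by abel, onorm_neg']
  rw [e1, e2, onorm_neg'] at h
  tauto

/-- R1: clause C4 for `![-c,p,q]` when `z 0 ≤ -c` and `p + q < c`. -/
lemma rule1 {c p q : ℤ} (hp : 0 < p) (hq : 0 < q) (hF : p + q < c)
    (z : Fin 3 → ℤ) (h0 : z 0 ≤ -c) : reducesOne ![-c, p, q] z := by
  have hc : 0 < c := by linarith
  refine Or.inr (Or.inr (Or.inr ⟨?_, ?_⟩))
  · refine vle3 ?_ ?_ ?_
    · show max (-(-c)) 0 ≤ max (-z 0) 0; omega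
    · show max (-p) 0 ≤ max (-z 1) 0; omega
    · show max (-q) 0 ≤ max (-z 2) 0; omega
  · rw [onorm3, onorm3]
    show |z 0 - -c| + |z 1 - p| + |z 2 - q| < |z 0| + |z 1| + |z 2|
    have e0 : |z 0 - -c| = -(z 0) - c := by rw [abs_of_nonpos (by linarith)]; ring
    have e0' : |z 0| = -(z 0) := abs_of_nonpos (by linarith)
    have e1 : |z 1 - p| ≤ |z 1| + p := by
      calc |z 1 - p| ≤ |z 1| + |p| := abs_sub _ _
      _ = |z 1| + p := by rw [abs_of_pos hp]
    have e2 : |z 2 - q| ≤ |z 2| + q := by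
      calc |z 2 - q| ≤ |z 2| + |q| := abs_sub _ _
      _ = |z 2| + q := by rw [abs_of_pos hq]
    linarith

/-- R2: clause C4 for `![r,-c,s]` when `z 1 ≤ -c`, `s ≤ z 2`, `r < c + s`. -/
lemma rule2 {r c s : ℤ} (hr : 0 < r) (hs : 0 < s) (hP : r < c + s) (hc : 0 < c)
    (z : Fin 3 → ℤ) (h1 : z 1 ≤ -c) (h2 : s ≤ z 2) : reducesOne ![r, -c, s] z := by
  refine Or.inr (Or.inr (Or.inr ⟨?_, ?_⟩))
  · refine vle3 ?_ ?_ ?_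
    · show max (-r) 0 ≤ max (-z 0) 0; omega
    · show max (-(-c)) 0 ≤ max (-z 1) 0; omega
    · show max (-s) 0 ≤ max (-z 2) 0; omega
  · rw [onorm3, onorm3]
    show |z 0 - r| + |z 1 - -c| + |z 2 - s| < |z 0| + |z 1| + |z 2|
    have e0 : |z 0 - r| ≤ |z 0| + r := by
      calc |z 0 - r| ≤ |z 0| + |r| := abs_sub _ _
      _ = |z 0| + r := by rw [abs_of_pos hr]
    have e1 : |z 1 - -c| = -(z 1) - c := by rw [abs_of_nonpos (by linarith)]; ring
    have e1' : |z 1| = -(z 1) := abs_of_nonpos (by linarith)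
    have e2 : |z 2 - s| = z 2 - s := abs_of_nonneg (by linarith)
    have e2' : |z 2| = z 2 := abs_of_nonneg (by linarith)
    linarith

/-- R3: clause C2 for `![w1,w2,-c]` when `z 1 ≤ -w2`, `c ≤ z 2`, `w1 < w2 + c`. -/
lemma rule3 {w1 w2 c : ℤ} (h1' : 0 < w1) (h2' : 0 < w2) (hc : 0 < c) (hP : w1 < w2 + c)
    (z : Fin 3 → ℤ) (h1 : z 1 ≤ -w2) (h2 : c ≤ z 2) : reducesOne ![w1, w2, -c] z := by
  refine Or.inr (Or.inl ⟨?_, ?_⟩)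
  · refine vle3 ?_ ?_ ?_
    · show max (-w1) 0 ≤ max (z 0) 0; omega
    · show max (-w2) 0 ≤ max (z 1) 0; omega
    · show max (-(-c)) 0 ≤ max (z 2) 0; omega
  · rw [onorm3, onorm3]
    show |z 0 + w1| + |z 1 + w2| + |z 2 + -c| < |z 0| + |z 1| + |z 2|
    have e0 : |z 0 + w1| ≤ |z 0| + w1 := by
      calc |z 0 + w1| ≤ |z 0| + |w1| := abs_add_le _ _
      _ = |z 0| + w1 := by rw [abs_of_pos h1']
    have e1 : |z 1 + w2| = -(z 1) - w2 := by rw [abs_of_nonpos (by linarith)]; ring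
    have e1' : |z 1| = -(z 1) := abs_of_nonpos (by linarith)
    have e2 : |z 2 + -c| = z 2 - c := by rw [abs_of_nonneg (by linarith)]; ring
    have e2' : |z 2| = z 2 := abs_of_nonneg (by linarith)
    linarith

/-- R4: clause C2 for `![w1,w2,-c]` when `z 0 ≤ -w1`, `z 1 ≤ -w2`, `c ≤ z 2`. -/
lemma rule4 {w1 w2 c : ℤ} (h1' : 0 < w1) (h2' : 0 < w2) (hc : 0 < c)
    (z : Fin 3 → ℤ) (h0 : z 0 ≤ -w1) (h1 : z 1 ≤ -w2) (h2 : c ≤ z 2) :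
    reducesOne ![w1, w2, -c] z := by
  refine Or.inr (Or.inl ⟨?_, ?_⟩)
  · refine vle3 ?_ ?_ ?_
    · show max (-w1) 0 ≤ max (z 0) 0; omega
    · show max (-w2) 0 ≤ max (z 1) 0; omega
    · show max (-(-c)) 0 ≤ max (z 2) 0; omega
  · rw [onorm3, onorm3]
    show |z 0 + w1| + |z 1 + w2| + |z 2 + -c| < |z 0| + |z 1| + |z 2|
    have e0 : |z 0 + w1| = -(z 0) - w1 := by rw [abs_of_nonpos (by linarith)]; ring
    have e0' : |z 0| = -(z 0) := abs_of_nonpos (by linarith)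
    have e1 : |z 1 + w2| = -(z 1) - w2 := by rw [abs_of_nonpos (by linarith)]; ring
    have e1' : |z 1| = -(z 1) := abs_of_nonpos (by linarith)
    have e2 : |z 2 + -c| = z 2 - c := by rw [abs_of_nonneg (by linarith)]; ring
    have e2' : |z 2| = z 2 := abs_of_nonneg (by linarith)
    linarith

/-- R9: clause C1 for `![r,-c,s]` when `r ≤ z 0`, `z 1 ≤ -c`, `s ≤ z 2`. -/
lemma rule9 {r c s : ℤ} (hr : 0 < r) (hs : 0 < s) (hc : 0 < c)
    (z : Fin 3 → ℤ) (h0 : r ≤ z 0) (h1 : z 1 ≤ -c) (h2 : s ≤ z 2) : reducesOne ![r, -c, s] z := by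
  refine Or.inl ⟨?_, ?_⟩
  · refine vle3 ?_ ?_ ?_
    · show max r 0 ≤ max (z 0) 0; omega
    · show max (-c) 0 ≤ max (z 1) 0; omega
    · show max s 0 ≤ max (z 2) 0; omega
  · rw [onorm3, onorm3]
    show |z 0 - r| + |z 1 - -c| + |z 2 - s| < |z 0| + |z 1| + |z 2|
    have e0 : |z 0 - r| = z 0 - r := abs_of_nonneg (by linarith)
    have e0' : |z 0| = z 0 := abs_of_nonneg (by linarith)
    have e1 : |z 1 - -c| = -(z 1) - c := by rw [abs_of_nonpos (by linarith)]; ring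
    have e1' : |z 1| = -(z 1) := abs_of_nonpos (by linarith)
    have e2 : |z 2 - s| = z 2 - s := abs_of_nonneg (by linarith)
    have e2' : |z 2| = z 2 := abs_of_nonneg (by linarith)
    linarith

lemma chain_mem_closure {m : ℕ} {B : Set (Fin m → ℤ)} :
    ∀ (k : ℕ) (f : Fin (k+1) → Fin m → ℤ),
      (∀ i : Fin k, f i.succ - f i.castSucc ∈ B ∪ -B) →
      f (Fin.last k) - f 0 ∈ AddSubgroup.closure B := by
  intro k
  induction k with
  | zero =>
    intro f _
    simp only [Fin.last_zero, sub_self]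
    exact zero_mem _
  | succ k ih =>
    intro f hm
    have h1 : f 1 - f 0 ∈ B ∪ -B := by
      have := hm 0
      simpa using this
    have h1' : f 1 - f 0 ∈ AddSubgroup.closure B := by
      rcases h1 with h | h
      · exact AddSubgroup.subset_closure h
      · rw [Set.mem_neg] at h
        have := AddSubgroup.subset_closure (G := Fin m → ℤ) h
        simpa using neg_mem this
    have h2 := ih (fun i => f i.succ) (fun i => by
      have := hm i.succ
      simpa only [Fin.succ_castSucc] using this)
    simp only [Fin.succ_last] at h2
    have heq : f (Fin.last (k+1)) - f 0
        = (f (Fin.last (k+1)) - f 1) + (f 1 - f 0) := by abel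
    rw [heq]
    exact add_mem (by simpa using h2) h1'

set_option maxHeartbeats 1600000 in
/-- dimension 3 non complete intersection. -/
theorem dim3_nci (a : Fin 3 → ℕ) (ha : ∀ i, 0 < a i)
    (h12 : a 0 < a 1) (h23 : a 1 < a 2)
    (c₁ c₂ c₃ v₁₂ v₁₃ v₂₁ v₂₃ v₃₁ v₃₂ : ℤ)
    (hc₁ : 0 < c₁) (hc₂ : 0 < c₂) (hc₃ : 0 < c₃)
    (hv₁₂ : 0 < v₁₂) (hv₁₃ : 0 < v₁₃) (hv₂₁ : 0 < v₂₁) (hv₂₃ : 0 < v₂₃)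
    (hv₃₁ : 0 < v₃₁) (hv₃₂ : 0 < v₃₂)
    (g₁ g₂ g₃ : Fin 3 → ℤ)
    (hg₁ : g₁ = ![-c₁, v₁₂, v₁₃]) (hg₂ : g₂ = ![v₂₁, -c₂, v₂₃]) (hg₃ : g₃ = ![v₃₁, v₃₂, -c₃])
    (hsum : g₁ + g₂ + g₃ = 0)
    (M : Set (Fin 3 → ℤ)) (hMdef : M = {g₁, g₂, g₃})
    (hmark : isMinimalMarkov a M) :
    (distanceReducing (kerV a) M ↔ reduces M (circuit a 1 2)) ∧
    (distanceReducing (kerV a) M ↔ (v₂₁ < c₂ + v₂₃ ∨ v₃₁ < v₃₂ + c₃)) := by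

    -- numeric casts
    have ha0 : (0:ℤ) < (a 0 : ℤ) := by exact_mod_cast ha 0
    have ha1 : (0:ℤ) < (a 1 : ℤ) := by exact_mod_cast ha 1
    have ha2 : (0:ℤ) < (a 2 : ℤ) := by exact_mod_cast ha 2
    have h01 : ((a 0 : ℤ)) < (a 1 : ℤ) := by exact_mod_cast h12
    have h12' : ((a 1 : ℤ)) < (a 2 : ℤ) := by exact_mod_cast h23
    -- membership of generators
    have hg₁M : g₁ ∈ M := by rw [hMdef]; exact Set.mem_insert _ _
    have hg₂M : g₂ ∈ M := by
      rw [hMdef]; exact Set.mem_insert_iff.mpr (Or.inr (Set.mem_insert _ _))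
    have hg₃M : g₃ ∈ M := by
      rw [hMdef]
      exact Set.mem_insert_iff.mpr (Or.inr (Set.mem_insert_iff.mpr (Or.inr rfl)))
    -- kernel relations
    have hk1 : (a 0 : ℤ) * c₁ = (a 1 : ℤ) * v₁₂ + (a 2 : ℤ) * v₁₃ := by
      have h := hmark.1.1 hg₁M
      simp only [kerV, Set.mem_setOf_eq, Fin.sum_univ_three, hg₁, vec0', vec1', vec2'] at h
      linarith
    have hk2 : (a 1 : ℤ) * c₂ = (a 0 : ℤ) * v₂₁ + (a 2 : ℤ) * v₂₃ := by
      have h := hmark.1.1 hg₂M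
      simp only [kerV, Set.mem_setOf_eq, Fin.sum_univ_three, hg₂, vec0', vec1', vec2'] at h
      linarith
    -- relations from g₁ + g₂ + g₃ = 0
    have hs0 : v₃₁ = c₁ - v₂₁ := by
      have h := congrFun hsum 0
      simp only [Pi.add_apply, Pi.zero_apply, hg₁, hg₂, hg₃, vec0'] at h
      linarith
    have hs1 : v₃₂ = c₂ - v₁₂ := by
      have h := congrFun hsum 1
      simp only [Pi.add_apply, Pi.zero_apply, hg₁, hg₂, hg₃, vec1'] at h
      linarith
    have hs2 : c₃ = v₁₃ + v₂₃ := by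
      have h := congrFun hsum 2
      simp only [Pi.add_apply, Pi.zero_apply, hg₁, hg₂, hg₃, vec2'] at h
      linarith
    have hv₁₂c₂ : v₁₂ < c₂ := by linarith
    have hv₂₁c₁ : v₂₁ < c₁ := by linarith
    have hF1 : v₁₂ + v₁₃ < c₁ := by
      have key : (a 0 : ℤ) * (v₁₂ + v₁₃) < (a 0 : ℤ) * c₁ := by
        nlinarith [mul_pos (by linarith : (0:ℤ) < (a 1:ℤ) - (a 0:ℤ)) hv₁₂,
          mul_pos (by linarith : (0:ℤ) < (a 2:ℤ) - (a 0:ℤ)) hv₁₃]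
      exact lt_of_mul_lt_mul_left key ha0.le
    -- every kernel element is an integer combination of g₁ and g₂
    have hspan : ∀ z ∈ kerV a, ∃ m k : ℤ, z = m • g₁ + k • g₂ := by
      intro z hz
      have hz' : (∑ i, (a i:ℤ) * z i) = 0 := hz
      have hzd : ∀ i, posP z i = negP z i + z i := by
        intro i; simp only [posP, negP]; omega
      have hxy : (∑ i, (a i:ℤ) * posP z i) = ∑ i, (a i:ℤ) * negP z i := by
        calc (∑ i, (a i:ℤ) * posP z i)
            = ∑ i, ((a i:ℤ) * negP z i + (a i:ℤ) * z i) := by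
              refine Finset.sum_congr rfl fun i _ => ?_
              rw [hzd i]; ring
          _ = (∑ i, (a i:ℤ) * negP z i) + ∑ i, (a i:ℤ) * z i := Finset.sum_add_distrib
          _ = ∑ i, (a i:ℤ) * negP z i := by rw [hz']; ring
      have hcon := hmark.1.2 (posP z) (negP z)
        (fun j => le_max_right _ _) (fun j => le_max_right _ _) hxy
      obtain ⟨k, f, h0, hl, hnn, hmv⟩ := hcon
      have hmem := chain_mem_closure k f hmv
      rw [h0, hl] at hmem
      have hzmem : z ∈ AddSubgroup.closure M := by
        have hd : negP z - posP z = -z := by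
          funext i
          simp only [Pi.sub_apply, Pi.neg_apply, posP, negP]
          omega
        rw [hd] at hmem
        simpa using neg_mem hmem
      have h3 : g₃ = (-1 : ℤ) • g₁ + (-1 : ℤ) • g₂ := by
        funext i
        have h := congrFun hsum i
        simp only [Pi.add_apply, Pi.zero_apply] at h
        simp only [Pi.add_apply, Pi.smul_apply, smul_eq_mul]
        linarith
      refine AddSubgroup.closure_induction ?_ ⟨0, 0, by simp⟩ ?_ ?_ hzmem
      · intro x hx
        rw [hMdef] at hx
        rcases hx with rfl | rfl | rfl
        · exact ⟨1, 0, by simp⟩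
        · exact ⟨0, 1, by simp⟩
        · exact ⟨-1, -1, h3⟩
      · rintro x y _ _ ⟨m, k, rfl⟩ ⟨m', k', rfl⟩
        exact ⟨m + m', k + k', by rw [add_smul, add_smul]; abel⟩
      · rintro x _ ⟨m, k, rfl⟩
        exact ⟨-m, -k, by rw [neg_smul, neg_smul, ← neg_add]⟩
    -- main reduction lemma
    have main : (v₂₁ < c₂ + v₂₃ ∨ v₃₁ < v₃₂ + c₃) → ∀ m k : ℤ,
        (1 ≤ m ∨ (m = 0 ∧ 1 ≤ k)) → reduces M (m • g₁ + k • g₂) := by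
      intro hP m k hmk
      have hz0 : (m • g₁ + k • g₂ : Fin 3 → ℤ) 0 = k * v₂₁ - m * c₁ := by
        simp only [Pi.add_apply, Pi.smul_apply, smul_eq_mul, hg₁, hg₂, vec0']; ring
      have hz1 : (m • g₁ + k • g₂ : Fin 3 → ℤ) 1 = m * v₁₂ - k * c₂ := by
        simp only [Pi.add_apply, Pi.smul_apply, smul_eq_mul, hg₁, hg₂, vec1']; ring
      have hz2 : (m • g₁ + k • g₂ : Fin 3 → ℤ) 2 = m * v₁₃ + k * v₂₃ := by
        simp only [Pi.add_apply, Pi.smul_apply, smul_eq_mul, hg₁, hg₂, vec2']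
      rcases hmk with hm | ⟨rfl, hk⟩
      · rcases le_or_gt k 0 with hk | hk
        · -- k ≤ 0 : rule R1
          refine ⟨g₁, hg₁M, ?_⟩
          have hr := rule1 hv₁₂ hv₁₃ hF1 (m • g₁ + k • g₂) (by
            rw [hz0]
            have t1 : k * v₂₁ ≤ 0 := mul_nonpos_of_nonpos_of_nonneg hk hv₂₁.le
            have t2 : c₁ ≤ m * c₁ := le_mul_of_one_le_left hc₁.le hm
            linarith)
          rwa [← hg₁] at hr
        · -- k ≥ 1
          have hk1 : (1:ℤ) ≤ k := hk
          rcases lt_or_ge (-(v₃₂)) ((m • g₁ + k • g₂ : Fin 3 → ℤ) 1) with h1 | h1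
          · -- z 1 > -v₃₂ forces k < m, rule R1
            have hkm : k < m := by
              by_contra hle
              push_neg at hle
              rw [hz1] at h1
              have t1 : (m-1) * v₁₂ ≤ (m-1) * c₂ :=
                mul_le_mul_of_nonneg_left hv₁₂c₂.le (by linarith)
              have t2 : (m-1) * c₂ ≤ (k-1) * c₂ :=
                mul_le_mul_of_nonneg_right (by linarith) hc₂.le
              have e1 : (m-1) * v₁₂ = m * v₁₂ - v₁₂ := by ring
              have e2 : (k-1) * c₂ = k * c₂ - c₂ := by ring
              linarith
            refine ⟨g₁, hg₁M, ?_⟩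
            have hr := rule1 hv₁₂ hv₁₃ hF1 (m • g₁ + k • g₂) (by
              rw [hz0]
              have t1 : k * v₂₁ ≤ (m-1) * v₂₁ :=
                mul_le_mul_of_nonneg_right (by linarith) hv₂₁.le
              have t2 : (m-1) * v₂₁ ≤ (m-1) * c₁ :=
                mul_le_mul_of_nonneg_left hv₂₁c₁.le (by linarith)
              have e1 : (m-1) * c₁ = m * c₁ - c₁ := by ring
              linarith)
            rwa [← hg₁] at hr
          · -- z 1 ≤ -v₃₂
            have hz2c : c₃ ≤ (m • g₁ + k • g₂ : Fin 3 → ℤ) 2 := by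
              rw [hz2]
              have t1 : v₁₃ ≤ m * v₁₃ := le_mul_of_one_le_left hv₁₃.le hm
              have t2 : v₂₃ ≤ k * v₂₃ := le_mul_of_one_le_left hv₂₃.le hk1
              linarith
            rcases le_or_gt k m with hkm | hkm
            · -- rule R4
              refine ⟨g₃, hg₃M, ?_⟩
              have hr := rule4 hv₃₁ hv₃₂ hc₃ (m • g₁ + k • g₂) (by
                rw [hz0]
                have t1 : (k-1) * v₂₁ ≤ (m-1) * v₂₁ :=
                  mul_le_mul_of_nonneg_right (by linarith) hv₂₁.le
                have t2 : (m-1) * v₂₁ ≤ (m-1) * c₁ :=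
                  mul_le_mul_of_nonneg_left hv₂₁c₁.le (by linarith)
                have e1 : (k-1) * v₂₁ = k * v₂₁ - v₂₁ := by ring
                have e2 : (m-1) * c₁ = m * c₁ - c₁ := by ring
                linarith) h1 hz2c
              rwa [← hg₃] at hr
            · -- m < k forces z 1 ≤ -c₂
              have hz1c : (m • g₁ + k • g₂ : Fin 3 → ℤ) 1 ≤ -c₂ := by
                rw [hz1]
                have t1 : m * v₁₂ ≤ m * c₂ :=
                  mul_le_mul_of_nonneg_left hv₁₂c₂.le (by linarith)
                have t2 : m * c₂ ≤ (k-1) * c₂ :=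
                  mul_le_mul_of_nonneg_right (by linarith) hc₂.le
                linarith
              rcases hP with hP1 | hP2
              · refine ⟨g₂, hg₂M, ?_⟩
                have hr := rule2 hv₂₁ hv₂₃ hP1 hc₂ (m • g₁ + k • g₂) hz1c
                  (by
                    have t1 : v₁₃ ≤ m * v₁₃ := le_mul_of_one_le_left hv₁₃.le hm
                    have t2 : v₂₃ ≤ k * v₂₃ := le_mul_of_one_le_left hv₂₃.le hk1
                    rw [hz2]; linarith)
                rwa [← hg₂] at hr
              · refine ⟨g₃, hg₃M, ?_⟩
                have hr := rule3 hv₃₁ hv₃₂ hc₃ hP2 (m • g₁ + k • g₂)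
                  (by linarith) hz2c
                rwa [← hg₃] at hr
      · -- m = 0, k ≥ 1 : rule R9
        have hk1 : (1:ℤ) ≤ k := hk
        refine ⟨g₂, hg₂M, ?_⟩
        have hr := rule9 hv₂₁ hv₂₃ hc₂ ((0:ℤ) • g₁ + k • g₂)
          (by rw [hz0]
              have t1 : v₂₁ ≤ k * v₂₁ := le_mul_of_one_le_left hv₂₁.le hk1
              linarith)
          (by rw [hz1]
              have t2 : c₂ ≤ k * c₂ := le_mul_of_one_le_left hc₂.le hk1
              linarith)
          (by rw [hz2]
              have t1 : v₂₃ ≤ k * v₂₃ := le_mul_of_one_le_left hv₂₃.le hk1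
              linarith)
        rwa [← hg₂] at hr
    -- condition implies distance reducing
    have hPimp : (v₂₁ < c₂ + v₂₃ ∨ v₃₁ < v₃₂ + c₃) → distanceReducing (kerV a) M := by
      intro hP z hz hzne
      obtain ⟨m, k, rfl⟩ := hspan z hz
      by_cases hmk : m = 0 ∧ k = 0
      · exfalso; apply hzne; rw [hmk.1, hmk.2]; simp
      rcases lt_trichotomy m 0 with hm | hm | hm
      · obtain ⟨u, hu, hred⟩ := main hP (-m) (-k) (Or.inl (by omega))
        refine ⟨u, hu, reducesOne_neg ?_⟩
        have e : -(m • g₁ + k • g₂) = (-m) • g₁ + (-k) • g₂ := by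
          rw [neg_smul, neg_smul, neg_add]
        rw [e]; exact hred
      · subst hm
        rcases lt_trichotomy k 0 with hk | hk | hk
        · obtain ⟨u, hu, hred⟩ := main hP 0 (-k) (Or.inr ⟨rfl, by omega⟩)
          refine ⟨u, hu, reducesOne_neg ?_⟩
          have e : -((0:ℤ) • g₁ + k • g₂) = (0:ℤ) • g₁ + (-k) • g₂ := by
            rw [neg_smul]; simp
          rw [e]; exact hred
        · exact absurd ⟨rfl, hk⟩ hmk
        · exact main hP 0 k (Or.inr ⟨rfl, by omega⟩)
      · exact main hP m k (Or.inl (by omega))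
    -- the circuit
    obtain ⟨T, U, hTpos, hUpos, hTU, hcirc⟩ :
        ∃ T U : ℕ, 0 < T ∧ 0 < U ∧ (a 1) * T = (a 2) * U ∧
          circuit a 1 2 = ![0, (T:ℤ), -(U:ℤ)] := by
      refine ⟨a 2 / Nat.gcd (a 1) (a 2), a 1 / Nat.gcd (a 1) (a 2), ?_, ?_, ?_, ?_⟩
      · exact Nat.div_pos (Nat.le_of_dvd (ha 2) (Nat.gcd_dvd_right _ _))
          (Nat.gcd_pos_of_pos_left _ (ha 1))
      · exact Nat.div_pos (Nat.le_of_dvd (ha 1) (Nat.gcd_dvd_left _ _))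
          (Nat.gcd_pos_of_pos_left _ (ha 1))
      · rw [← Nat.mul_div_assoc _ (Nat.gcd_dvd_right (a 1) (a 2)),
          ← Nat.mul_div_assoc _ (Nat.gcd_dvd_left (a 1) (a 2)), Nat.mul_comm]
      · funext i
        fin_cases i <;> simp [circuit, vec0', vec1', vec2']
    have hT : (0:ℤ) < (T:ℤ) := by exact_mod_cast hTpos
    have hU : (0:ℤ) < (U:ℤ) := by exact_mod_cast hUpos
    have hTU' : (a 1 : ℤ) * (T:ℤ) = (a 2 : ℤ) * (U:ℤ) := by exact_mod_cast hTU
    have hcircmem : circuit a 1 2 ∈ kerV a := by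
      show (∑ i, (a i:ℤ) * circuit a 1 2 i) = 0
      rw [hcirc]
      simp only [Fin.sum_univ_three, vec0', vec1', vec2']
      linarith
    have hcircne : circuit a 1 2 ≠ 0 := by
      intro h
      rw [hcirc] at h
      have h1 := congrFun h 1
      simp only [vec1', Pi.zero_apply] at h1
      omega
    -- reduction of the circuit implies the numerical condition
    have hredP : reduces M (circuit a 1 2) → (v₂₁ < c₂ + v₂₃ ∨ v₃₁ < v₃₂ + c₃) := by
      intro hred
      by_contra hP
      push_neg at hP
      obtain ⟨hP1, hP2⟩ := hP
      obtain ⟨u, hu, hredu⟩ := hred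
      rw [hMdef] at hu
      rw [hcirc] at hredu
      rcases hu with rfl | rfl | rfl
      · rw [hg₁] at hredu
        rcases hredu with ⟨h, _⟩ | ⟨h, _⟩ | ⟨h, _⟩ | ⟨h, _⟩
        · have hx : max v₁₃ 0 ≤ max (-(U:ℤ)) 0 := h 2; exact absurd hx (by omega)
        · have hx : max (-(-c₁)) 0 ≤ max (0:ℤ) 0 := h 0; exact absurd hx (by omega)
        · have hx : max v₁₂ 0 ≤ max (-(T:ℤ)) 0 := h 1; exact absurd hx (by omega)
        · have hx : max (-(-c₁)) 0 ≤ max (-(0:ℤ)) 0 := h 0; exact absurd hx (by omega)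
      · rw [hg₂] at hredu
        rcases hredu with ⟨h, _⟩ | ⟨h, hn⟩ | ⟨h, _⟩ | ⟨h, _⟩
        · have hx : max v₂₁ 0 ≤ max (0:ℤ) 0 := h 0; exact absurd hx (by omega)
        · have hc₂T : c₂ ≤ (T:ℤ) := by
            have hx : max (-(-c₂)) 0 ≤ max (T:ℤ) 0 := h 1; omega
          rw [onorm3, onorm3] at hn
          have hn' : |(0:ℤ) + v₂₁| + |(T:ℤ) + -c₂| + |(-(U:ℤ)) + v₂₃|
              < |(0:ℤ)| + |(T:ℤ)| + |(-(U:ℤ))| := hn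
          have e1 : |(0:ℤ) + v₂₁| = v₂₁ := by rw [zero_add]; exact abs_of_pos hv₂₁
          have e2 : |(T:ℤ) + -c₂| = (T:ℤ) - c₂ := by rw [abs_of_nonneg (by linarith)]; ring
          have e3 : |(0:ℤ)| = 0 := abs_zero
          have e4 : |(T:ℤ)| = (T:ℤ) := abs_of_pos hT
          have e5 : |(-(U:ℤ))| = (U:ℤ) := by rw [abs_neg]; exact abs_of_pos hU
          rcases le_total v₂₃ (U:ℤ) with hcase | hcase
          · have e6 : |(-(U:ℤ)) + v₂₃| = (U:ℤ) - v₂₃ := by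
              rw [abs_of_nonpos (by linarith)]; ring
            rw [e1, e2, e3, e4, e5, e6] at hn'
            linarith
          · have e6 : |(-(U:ℤ)) + v₂₃| = v₂₃ - (U:ℤ) := by
              rw [abs_of_nonneg (by linarith)]; ring
            rw [e1, e2, e3, e4, e5, e6] at hn'
            linarith
        · have hx : max v₂₁ 0 ≤ max (-(0:ℤ)) 0 := h 0; exact absurd hx (by omega)
        · have hx : max (-(-c₂)) 0 ≤ max (-(T:ℤ)) 0 := h 1; exact absurd hx (by omega)
      · rw [hg₃] at hredu
        rcases hredu with ⟨h, _⟩ | ⟨h, _⟩ | ⟨h, _⟩ | ⟨h, hn⟩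
        · have hx : max v₃₁ 0 ≤ max (0:ℤ) 0 := h 0; exact absurd hx (by omega)
        · have hx : max (-(-c₃)) 0 ≤ max (-(U:ℤ)) 0 := h 2; exact absurd hx (by omega)
        · have hx : max v₃₁ 0 ≤ max (-(0:ℤ)) 0 := h 0; exact absurd hx (by omega)
        · have hc₃U : c₃ ≤ (U:ℤ) := by
            have hx : max (-(-c₃)) 0 ≤ max (-(-(U:ℤ))) 0 := h 2; omega
          rw [onorm3, onorm3] at hn
          have hn' : |(0:ℤ) - v₃₁| + |(T:ℤ) - v₃₂| + |(-(U:ℤ)) - -c₃|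
              < |(0:ℤ)| + |(T:ℤ)| + |(-(U:ℤ))| := hn
          have e1 : |(0:ℤ) - v₃₁| = v₃₁ := by rw [zero_sub, abs_neg]; exact abs_of_pos hv₃₁
          have e3 : |(0:ℤ)| = 0 := abs_zero
          have e4 : |(T:ℤ)| = (T:ℤ) := abs_of_pos hT
          have e5 : |(-(U:ℤ))| = (U:ℤ) := by rw [abs_neg]; exact abs_of_pos hU
          have e6 : |(-(U:ℤ)) - -c₃| = (U:ℤ) - c₃ := by
            rw [abs_of_nonpos (by linarith)]; ring
          rcases le_total v₃₂ (T:ℤ) with hcase | hcase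
          · have e2 : |(T:ℤ) - v₃₂| = (T:ℤ) - v₃₂ := abs_of_nonneg (by linarith)
            rw [e1, e2, e3, e4, e5, e6] at hn'
            linarith
          · have e2 : |(T:ℤ) - v₃₂| = v₃₂ - (T:ℤ) := by
              rw [abs_of_nonpos (by linarith)]; ring
            rw [e1, e2, e3, e4, e5, e6] at hn'
            linarith
    constructor
    · constructor
      · intro hDR
        exact hDR _ hcircmem hcircne
      · intro hr
        exact hPimp (hredP hr)
    · constructor
      · intro hDR
        exact hredP (hDR _ hcircmem hcircne)
      · exact hPimp


end DistRed
end
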